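/- Let ψ : C → ℝ be strictly Σ-convex, let I ⊆ {1,…,n} with |I| = r, and let α_i ∈ [0,1] for i ∈ I. Set c = ∑_{i∈I} α_i v_i and d = ∑_{i∈I} (1 − α_i) v_i. Then ψ(c) + ψ(d) ≤ ∑_{i∈I} ψ(v_i), and equality holds if and only if there is a cone of Σ containing {v_i : i ∈ I, α_i > 0} and a cone of Σ containing {v_i : i ∈ I, α_i < 1}. -/

import Mathlib

open scoped BigOperators Classical

noncomputable section

namespace BBGKZ

/-- The real vector corresponding to the `i`-th integer vector `v i`. -/
def vR {r n : ℕ} (v : Fin n → Fin r → ℤ) (i : Fin n) : Fin r → ℝ := fun j => (v i j : ℝ)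

/-- The complex vector corresponding to the `i`-th integer vector `v i`. -/
def vC {r n : ℕ} (v : Fin n → Fin r → ℤ) (i : Fin n) : Fin r → ℂ := fun j => (v i j : ℂ)

/-- The real vector corresponding to an integer vector. -/
def intVec {r : ℕ} (c : Fin r → ℤ) : Fin r → ℝ := fun j => (c j : ℝ)

/-- The complex vector corresponding to an integer vector. -/
def intVecC {r : ℕ} (c : Fin r → ℤ) : Fin r → ℂ := fun j => (c j : ℂ)

/-- The cone `C = ∑ ℝ_{≥0} v_i`. -/
def coneC {r n : ℕ} (v : Fin n → Fin r → ℤ) : Set (Fin r → ℝ) :=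
  {x | ∃ t : Fin n → ℝ, (∀ i, 0 ≤ t i) ∧ x = ∑ i, t i • vR v i}

/-- The cone `σ_I = ∑_{i ∈ I} ℝ_{≥0} v_i`. -/
def sigmaCone {r n : ℕ} (v : Fin n → Fin r → ℤ) (I : Finset (Fin n)) : Set (Fin r → ℝ) :=
  {x | ∃ t : Fin n → ℝ, (∀ i, 0 ≤ t i) ∧ (∀ i, i ∉ I → t i = 0) ∧ x = ∑ i, t i • vR v i}

/-- `v_I = ∑_{i ∈ I} v_i`. -/
def vSum {r n : ℕ} (v : Fin n → Fin r → ℤ) (I : Finset (Fin n)) : Fin r → ℤ := ∑ i ∈ I, v i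

/-- `Vol_I`: the absolute value of the determinant of the `r × r` matrix whose rows are the
vectors `v i`, `i ∈ I` (defined when `I.card = r`, and `0` otherwise). -/
def Vol {r n : ℕ} (v : Fin n → Fin r → ℤ) (I : Finset (Fin n)) : ℝ :=
  if h : I.card = r then
    |(Matrix.of fun a b : Fin r => vR v (I.orderIsoOfFin h a).1 b).det| else 0

/-- A vector of `ℝ^r` is generic if it lies in no proper linear subspace spanned by integer
vectors. -/
def GenericVec {r : ℕ} (w : Fin r → ℝ) : Prop :=
  ∀ T : Set (Fin r → ℤ), Submodule.span ℝ (intVec '' T) ≠ ⊤ → w ∉ Submodule.span ℝ (intVec '' T)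

/-- The value at `β ∈ ℂ^r` of the `ℂ`-linear extension of `μ : ℝ^r → ℝ`. -/
def muC {r : ℕ} (μ : (Fin r → ℝ) →ₗ[ℝ] ℝ) (β : Fin r → ℂ) : ℂ :=
  ∑ j, β j * (μ (Pi.single j 1) : ℂ)

/-- A solution of `bbGKZ(S, 0)` on `U`, where `S` is `C` or `C°`. -/
def IsSol0 {r n : ℕ} (v : Fin n → Fin r → ℤ) (S : Set (Fin r → ℝ))
    (U : Set (Fin n → ℂ)) (Φ : (Fin r → ℤ) → (Fin n → ℂ) → ℂ) : Prop :=
  (∀ c : Fin r → ℤ, intVec c ∈ S → DifferentiableOn ℂ (Φ c) U) ∧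
  (∀ c : Fin r → ℤ, intVec c ∈ S → ∀ i : Fin n, ∀ x ∈ U,
      fderiv ℂ (Φ c) x (Pi.single i 1) = Φ (c + v i) x) ∧
  (∀ c : Fin r → ℤ, intVec c ∈ S → ∀ μ : (Fin r → ℝ) →ₗ[ℝ] ℝ, ∀ x ∈ U,
      (∑ i, (μ (vR v i) : ℂ) * x i * fderiv ℂ (Φ c) x (Pi.single i 1))
        + (μ (intVec c) : ℂ) * Φ c x = 0)

/-- A solution of `bbGKZ(S, β)` on `U`. -/
def IsSolBeta {r n : ℕ} (v : Fin n → Fin r → ℤ) (S : Set (Fin r → ℝ)) (β : Fin r → ℂ)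
    (U : Set (Fin n → ℂ)) (Φ : (Fin r → ℤ) → (Fin n → ℂ) → ℂ) : Prop :=
  (∀ c : Fin r → ℤ, intVec c ∈ S → DifferentiableOn ℂ (Φ c) U) ∧
  (∀ c : Fin r → ℤ, intVec c ∈ S → ∀ i : Fin n, ∀ x ∈ U,
      fderiv ℂ (Φ c) x (Pi.single i 1) = Φ (c + v i) x) ∧
  (∀ c : Fin r → ℤ, intVec c ∈ S → ∀ μ : (Fin r → ℝ) →ₗ[ℝ] ℝ, ∀ x ∈ U,
      (∑ i, (μ (vR v i) : ℂ) * x i * fderiv ℂ (Φ c) x (Pi.single i 1))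
        + ((μ (intVec c) : ℂ) - muC μ β) * Φ c x = 0)

/-- The coefficients `ξ_{c,d,I}` determined by a generic vector `v0 ∈ C°`:
`ξ_{c,d,I} = (-1)^{deg c}` if `σ_I` is `r`-dimensional and for all sufficiently small `ε > 0`
both `c + ε v0` and `d - ε v0` lie in the interior of `σ_I`, and `0` otherwise. -/
def xiCoef {r n : ℕ} (v : Fin n → Fin r → ℤ) (degZ : (Fin r → ℤ) → ℤ) (v0 : Fin r → ℝ)
    (c d : Fin r → ℤ) (I : Finset (Fin n)) : ℂ :=
  if intVec c ∈ coneC v ∧ intVec d ∈ interior (coneC v) ∧ c + d = vSum v I ∧ I.card = r ∧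
      Submodule.span ℝ (vR v '' (I : Set (Fin n))) = ⊤ ∧
      (∀ᶠ ε in nhdsWithin (0 : ℝ) (Set.Ioi 0),
        intVec c + ε • v0 ∈ interior (sigmaCone v I) ∧
        intVec d - ε • v0 ∈ interior (sigmaCone v I))
  then (-1 : ℂ) ^ (degZ c) else 0

/-- The pairing `⟨Φ, Ψ⟩ = ∑_{c,d,I} ξ_{c,d,I} Vol_I (∏_{i∈I} x_i) Φ_c Ψ_d`, where the
(finitely supported) inner sum is over lattice points `c ∈ C`, `d ∈ C°` with `c + d = v_I`. -/
def pairingXi {r n : ℕ} (v : Fin n → Fin r → ℤ)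
    (ξ : (Fin r → ℤ) → (Fin r → ℤ) → Finset (Fin n) → ℂ)
    (Φ Ψ : (Fin r → ℤ) → (Fin n → ℂ) → ℂ) (x : Fin n → ℂ) : ℂ :=
  ∑ I ∈ Finset.powersetCard r (Finset.univ : Finset (Fin n)),
    ∑ᶠ c : Fin r → ℤ,
      (if intVec c ∈ coneC v ∧ intVec (vSum v I - c) ∈ interior (coneC v) then
        ξ c (vSum v I - c) I * (Vol v I : ℂ) * (∏ i ∈ I, x i) * Φ c x * Ψ (vSum v I - c) x
      else 0)

/-- A finite simplicial fan supported on `C` with rays among the `v_i`, encoded by the finite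
family of index sets of its cones. -/
structure IsFan {r n : ℕ} (v : Fin n → Fin r → ℤ) (Fam : Finset (Finset (Fin n))) : Prop where
  indep : ∀ I ∈ Fam, LinearIndependent ℝ (fun i : {x : Fin n // x ∈ I} => vR v i.1)
  downward : ∀ I ∈ Fam, ∀ J : Finset (Fin n), J ⊆ I → J ∈ Fam
  inter : ∀ I ∈ Fam, ∀ J ∈ Fam, ∃ K ∈ Fam, K ⊆ I ∧ K ⊆ J ∧
    sigmaCone v I ∩ sigmaCone v J = sigmaCone v K
  max_cones : ∀ I ∈ Fam, ∃ J ∈ Fam, I ⊆ J ∧ J.card = r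
  union_eq : (⋃ I ∈ (Fam : Set (Finset (Fin n))), sigmaCone v I) = coneC v

/-- `ψ` is strictly `Σ`-convex. -/
def StrictSigmaConvex {r n : ℕ} (v : Fin n → Fin r → ℤ) (Fam : Finset (Finset (Fin n)))
    (ψ : (Fin r → ℝ) → ℝ) : Prop :=
  ∀ I ∈ Fam, I.card = r → ∃ ℓ : (Fin r → ℝ) →ₗ[ℝ] ℝ,
    (∀ x ∈ sigmaCone v I, ψ x = ℓ x) ∧ (∀ x ∈ coneC v, x ∉ sigmaCone v I → ℓ x < ψ x)

/-- The minimal cone of the fan containing a given point. -/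
def IsMinConeOf {r n : ℕ} (v : Fin n → Fin r → ℤ) (Fam : Finset (Finset (Fin n)))
    (K : Finset (Fin n)) (w : Fin r → ℝ) : Prop :=
  K ∈ Fam ∧ w ∈ sigmaCone v K ∧ ∀ K' ∈ Fam, w ∈ sigmaCone v K' → K ⊆ K'

/-- The cone `C_Σ` of the secondary fan corresponding to `Σ`. -/
def CSigma {r n : ℕ} (v : Fin n → Fin r → ℤ) (Fam : Finset (Finset (Fin n))) :
    Set (Fin n → ℝ) :=
  {η | ∀ I ∈ Fam, I.card = r → ∀ ℓ : (Fin r → ℝ) →ₗ[ℝ] ℝ,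
    (∀ i ∈ I, ℓ (vR v i) = η i) → ∀ j, ℓ (vR v j) ≤ η j}

/-- The index set `L_{c,γ,σ;β}` of the Γ-series. -/
def Lset {r n : ℕ} (v : Fin n → Fin r → ℤ) (I0 : Finset (Fin n)) (β : Fin r → ℂ)
    (c γ : Fin r → ℤ) : Set (Fin n → ℂ) :=
  {l | (∑ i, l i • vC v i) = β - intVecC c
    ∧ (∀ i ∉ I0, ∃ m : ℤ, l i = (m : ℂ))
    ∧ (∃ m : Fin n → ℤ,
        intVecC c + ∑ i ∈ I0ᶜ, l i • vC v i = -intVecC γ + ∑ i ∈ I0, (m i : ℂ) • vC v i)}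

/-- An individual term `∏_i exp(l_i Log x_i)/Γ(1 + l_i)` of the Γ-series.  (Mathlib's
`Complex.Gamma` vanishes at the poles of `Γ`, so `1/Γ` is `0` there.) -/
def gammaTerm {n : ℕ} (l x : Fin n → ℂ) : ℂ :=
  ∏ i, Complex.exp (l i * Complex.log (x i)) / Complex.Gamma (1 + l i)

/-- The region `R(ψ̂)`. -/
def Rregion {r n : ℕ} (v : Fin n → Fin r → ℤ) (Fam : Finset (Finset (Fin n)))
    (ψh : Fin n → ℝ) : Set (Fin n → ℂ) :=
  {x | (∀ i, x i ≠ 0 ∧ |Complex.arg (x i)| < Real.pi) ∧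
    (fun i => -Real.log (‖x i‖) - ψh i) ∈ CSigma v Fam}

/-- The Γ-series `Φ^{γ,σ}_c` with parameter `β`. -/
def GammaSeries {r n : ℕ} (v : Fin n → Fin r → ℤ) (I0 : Finset (Fin n)) (β : Fin r → ℂ)
    (γ c : Fin r → ℤ) (x : Fin n → ℂ) : ℂ :=
  ∑' l : (Lset v I0 β c γ), gammaTerm (l : Fin n → ℂ) x

/-- Absolute and uniform-on-compacts convergence of the Γ-series on a set `S`:
for every compact `K ⊆ S`, `∑_{l ∈ L} sup_{x ∈ K} |term_l(x)| < ∞`. -/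
def ConvergesOn {r n : ℕ} (v : Fin n → Fin r → ℤ) (I0 : Finset (Fin n)) (β : Fin r → ℂ)
    (γ c : Fin r → ℤ) (S : Set (Fin n → ℂ)) : Prop :=
  ∀ K ⊆ S, IsCompact K →
    Summable (fun l : (Lset v I0 β c γ) =>
      sSup ((fun x => ‖gammaTerm (l : Fin n → ℂ) x‖) '' K))

/-- `β ∈ ℂ^r` is generic: it lies in no proper affine subspace of `ℂ^r` defined over `ℚ`. -/
def GenericBeta {r : ℕ} (β : Fin r → ℂ) : Prop :=
  ∀ q : Fin r → ℚ, q ≠ 0 → ∀ q0 : ℚ, (∑ j, (q j : ℂ) * β j) ≠ (q0 : ℂ)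

/-
Let `x = ∑ tᵢ vᵢ` with `tᵢ ≥ 0`, and let `σ_J` be a maximal cone containing `x`. Since
`ψ = ℓ_J` on `σ_J` and `ψ ≥ ℓ_J` on `C`, linearity gives
`ψ x = ∑ tᵢ ℓ_J(vᵢ) ≤ ∑ tᵢ ψ(vᵢ)`, with equality exactly when every `vᵢ` with `tᵢ > 0` lies in
`σ_J`, because `ℓ_J(vᵢ) < ψ(vᵢ)` off `σ_J`. Conversely, if all those `vᵢ` lie in one cone
of `Σ`, any maximal cone containing it contains `x` as well, so equality holds. The theorem is
the sum of the two instances `t = α` and `t = 1 - α`, as `∑ αᵢ ψ(vᵢ) + ∑ (1 - αᵢ) ψ(vᵢ)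
= ∑ ψ(vᵢ)`.
-/

section

variable {r n : ℕ} {v : Fin n → Fin r → ℤ}

def sigmaPointedCone (v : Fin n → Fin r → ℤ) (K : Finset (Fin n)) :
    PointedCone ℝ (Fin r → ℝ) where
  carrier := sigmaCone v K
  zero_mem' := ⟨0, fun _ => le_rfl, fun _ _ => rfl, by simp⟩
  add_mem' := by
    rintro _ _ ⟨t, ht₀, htK, rfl⟩ ⟨s, hs₀, hsK, rfl⟩
    exact ⟨t + s, fun i => add_nonneg (ht₀ i) (hs₀ i), fun i hi => by simp [htK i hi, hsK i hi],
      by simp [add_smul, Finset.sum_add_distrib]⟩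
  smul_mem' := by
    rintro ⟨a, ha⟩ _ ⟨t, ht₀, htK, rfl⟩
    exact ⟨a • t, fun i => mul_nonneg ha (ht₀ i), fun i hi => by simp [htK i hi],
      by simp [Finset.smul_sum, smul_smul]⟩

lemma sigmaCone_mono {K J : Finset (Fin n)} (h : K ⊆ J) : sigmaCone v K ⊆ sigmaCone v J := by
  rintro x ⟨t, ht₀, htK, rfl⟩
  exact ⟨t, ht₀, fun i hi => htK i (fun hiK => hi (h hiK)), rfl⟩

lemma coneC_eq_sigmaCone_univ : coneC v = sigmaCone v Finset.univ := by
  ext x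
  constructor
  · rintro ⟨t, ht₀, rfl⟩
    exact ⟨t, ht₀, fun i hi => absurd (Finset.mem_univ i) hi, rfl⟩
  · rintro ⟨t, ht₀, -, rfl⟩
    exact ⟨t, ht₀, rfl⟩

lemma vR_mem_sigmaCone {K : Finset (Fin n)} {i : Fin n} (hi : i ∈ K) :
    vR v i ∈ sigmaCone v K := by
  refine ⟨Pi.single i 1, fun j => ?_, fun j hj => ?_, by simp [Pi.single_apply, ite_smul]⟩
  · by_cases hji : j = i <;> simp [hji]
  · exact Pi.single_eq_of_ne (by rintro rfl; exact hj hi) 1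

lemma vR_mem_coneC (i : Fin n) : vR v i ∈ coneC v :=
  coneC_eq_sigmaCone_univ ▸ vR_mem_sigmaCone (Finset.mem_univ i)

lemma sum_smul_vR_mem_sigmaCone {K I : Finset (Fin n)} {t : Fin n → ℝ}
    (ht : ∀ i ∈ I, 0 ≤ t i) (hK : ∀ i ∈ I, 0 < t i → vR v i ∈ sigmaCone v K) :
    ∑ i ∈ I, t i • vR v i ∈ sigmaCone v K := by
  refine (sigmaPointedCone v K).sum_mem fun i hi => ?_
  rcases (ht i hi).eq_or_lt with h | h
  · simp [← h, (sigmaPointedCone v K).zero_mem]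
  · exact (sigmaPointedCone v K).smul_mem (ht i hi) (hK i hi h)

lemma sum_smul_vR_mem_coneC {I : Finset (Fin n)} {t : Fin n → ℝ} (ht : ∀ i ∈ I, 0 ≤ t i) :
    ∑ i ∈ I, t i • vR v i ∈ coneC v :=
  coneC_eq_sigmaCone_univ ▸
    sum_smul_vR_mem_sigmaCone ht fun i _ _ => vR_mem_sigmaCone (Finset.mem_univ i)

/-- `ℓ` is the linear function `ℓ_σ` attached to `σ = σ_J` by strict `Σ`-convexity of `ψ`. -/
structure IsStrictSupport (v : Fin n → Fin r → ℤ) (J : Finset (Fin n))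
    (ψ : (Fin r → ℝ) → ℝ) (ℓ : (Fin r → ℝ) →ₗ[ℝ] ℝ) : Prop where
  eq_on : ∀ x ∈ sigmaCone v J, ψ x = ℓ x
  lt_off : ∀ x ∈ coneC v, x ∉ sigmaCone v J → ℓ x < ψ x

namespace IsStrictSupport

variable {J I : Finset (Fin n)} {ψ : (Fin r → ℝ) → ℝ} {ℓ : (Fin r → ℝ) →ₗ[ℝ] ℝ}
  {t : Fin n → ℝ}

lemma le (h : IsStrictSupport v J ψ ℓ) {x : Fin r → ℝ} (hx : x ∈ coneC v) : ℓ x ≤ ψ x := by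
  by_cases hxJ : x ∈ sigmaCone v J
  · exact (h.eq_on x hxJ).ge
  · exact (h.lt_off x hx hxJ).le

lemma eq_iff_mem (h : IsStrictSupport v J ψ ℓ) {x : Fin r → ℝ} (hx : x ∈ coneC v) :
    ℓ x = ψ x ↔ x ∈ sigmaCone v J :=
  ⟨fun heq => by_contra fun hxJ => (h.lt_off x hx hxJ).ne heq, fun hxJ => (h.eq_on x hxJ).symm⟩

lemma apply_sum_eq (h : IsStrictSupport v J ψ ℓ) (hx : ∑ i ∈ I, t i • vR v i ∈ sigmaCone v J) :
    ψ (∑ i ∈ I, t i • vR v i) = ∑ i ∈ I, t i * ℓ (vR v i) := by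
  simp [h.eq_on _ hx, map_sum]

lemma mul_le (h : IsStrictSupport v J ψ ℓ) {i : Fin n} (ht : 0 ≤ t i) :
    t i * ℓ (vR v i) ≤ t i * ψ (vR v i) :=
  mul_le_mul_of_nonneg_left (h.le (vR_mem_coneC i)) ht

lemma apply_sum_le (h : IsStrictSupport v J ψ ℓ) (ht : ∀ i ∈ I, 0 ≤ t i)
    (hx : ∑ i ∈ I, t i • vR v i ∈ sigmaCone v J) :
    ψ (∑ i ∈ I, t i • vR v i) ≤ ∑ i ∈ I, t i * ψ (vR v i) :=
  h.apply_sum_eq hx ▸ Finset.sum_le_sum fun i hi => h.mul_le (ht i hi)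

lemma apply_sum_eq_iff (h : IsStrictSupport v J ψ ℓ) (ht : ∀ i ∈ I, 0 ≤ t i)
    (hx : ∑ i ∈ I, t i • vR v i ∈ sigmaCone v J) :
    ψ (∑ i ∈ I, t i • vR v i) = ∑ i ∈ I, t i * ψ (vR v i) ↔
      ∀ i ∈ I, 0 < t i → vR v i ∈ sigmaCone v J := by
  rw [h.apply_sum_eq hx, Finset.sum_eq_sum_iff_of_le fun i hi => h.mul_le (ht i hi)]
  refine forall₂_congr fun i hi => ?_
  rw [← h.eq_iff_mem (vR_mem_coneC i)]
  rcases (ht i hi).eq_or_lt with h₀ | h₀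
  · simp [← h₀]
  · simp [h₀, h₀.ne']

end IsStrictSupport

namespace StrictSigmaConvex

variable {Fam : Finset (Finset (Fin n))} {ψ : (Fin r → ℝ) → ℝ} {I : Finset (Fin n)}
  {t : Fin n → ℝ}

lemma exists_isStrictSupport_of_mem (hψ : StrictSigmaConvex v Fam ψ) (hFam : IsFan v Fam)
    {K : Finset (Fin n)} (hK : K ∈ Fam) :
    ∃ J ∈ Fam, K ⊆ J ∧ ∃ ℓ, IsStrictSupport v J ψ ℓ := by
  obtain ⟨J, hJ, hKJ, hJcard⟩ := hFam.max_cones K hK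
  obtain ⟨ℓ, hℓ_eq, hℓ_lt⟩ := hψ J hJ hJcard
  exact ⟨J, hJ, hKJ, ℓ, ⟨hℓ_eq, hℓ_lt⟩⟩

lemma exists_isStrictSupport_of_mem_coneC (hψ : StrictSigmaConvex v Fam ψ)
    (hFam : IsFan v Fam) {x : Fin r → ℝ} (hx : x ∈ coneC v) :
    ∃ J ∈ Fam, x ∈ sigmaCone v J ∧ ∃ ℓ, IsStrictSupport v J ψ ℓ := by
  rw [← hFam.union_eq, Set.mem_iUnion₂] at hx
  obtain ⟨K, hK, hxK⟩ := hx
  obtain ⟨J, hJ, hKJ, hℓ⟩ := hψ.exists_isStrictSupport_of_mem hFam hK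
  exact ⟨J, hJ, sigmaCone_mono hKJ hxK, hℓ⟩

lemma apply_sum_le (hψ : StrictSigmaConvex v Fam ψ) (hFam : IsFan v Fam)
    (ht : ∀ i ∈ I, 0 ≤ t i) :
    ψ (∑ i ∈ I, t i • vR v i) ≤ ∑ i ∈ I, t i * ψ (vR v i) := by
  obtain ⟨J, -, hx, ℓ, hℓ⟩ :=
    hψ.exists_isStrictSupport_of_mem_coneC hFam (sum_smul_vR_mem_coneC ht)
  exact hℓ.apply_sum_le ht hx

lemma apply_sum_eq_iff (hψ : StrictSigmaConvex v Fam ψ) (hFam : IsFan v Fam)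
    (ht : ∀ i ∈ I, 0 ≤ t i) :
    ψ (∑ i ∈ I, t i • vR v i) = ∑ i ∈ I, t i * ψ (vR v i) ↔
      ∃ K ∈ Fam, ∀ i ∈ I, 0 < t i → vR v i ∈ sigmaCone v K := by
  constructor
  · intro heq
    obtain ⟨J, hJ, hx, ℓ, hℓ⟩ :=
      hψ.exists_isStrictSupport_of_mem_coneC hFam (sum_smul_vR_mem_coneC ht)
    exact ⟨J, hJ, (hℓ.apply_sum_eq_iff ht hx).mp heq⟩
  · rintro ⟨K, hK, hvK⟩
    obtain ⟨J, -, hKJ, ℓ, hℓ⟩ := hψ.exists_isStrictSupport_of_mem hFam hK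
    have hvJ : ∀ i ∈ I, 0 < t i → vR v i ∈ sigmaCone v J :=
      fun i hi hti => sigmaCone_mono hKJ (hvK i hi hti)
    exact (hℓ.apply_sum_eq_iff ht (sum_smul_vR_mem_sigmaCone ht hvJ)).mpr hvJ

end StrictSigmaConvex

end

theorem statement9_general
    (r n : ℕ)
    (v : Fin n → Fin r → ℤ)
    (Fam : Finset (Finset (Fin n))) (hFam : IsFan v Fam)
    (ψ : (Fin r → ℝ) → ℝ) (hψ : StrictSigmaConvex v Fam ψ)
    (I : Finset (Fin n))
    (α : Fin n → ℝ) (hα : ∀ i ∈ I, 0 ≤ α i ∧ α i ≤ 1) :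
    ψ (∑ i ∈ I, α i • vR v i) + ψ (∑ i ∈ I, (1 - α i) • vR v i) ≤ ∑ i ∈ I, ψ (vR v i) ∧
    (ψ (∑ i ∈ I, α i • vR v i) + ψ (∑ i ∈ I, (1 - α i) • vR v i) = ∑ i ∈ I, ψ (vR v i) ↔
      (∃ K ∈ Fam, ∀ i ∈ I, 0 < α i → vR v i ∈ sigmaCone v K) ∧
      (∃ K ∈ Fam, ∀ i ∈ I, α i < 1 → vR v i ∈ sigmaCone v K)) := by
  have hα₀ : ∀ i ∈ I, 0 ≤ α i := fun i hi => (hα i hi).1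
  have hα₁ : ∀ i ∈ I, 0 ≤ 1 - α i := fun i hi => sub_nonneg.mpr (hα i hi).2
  have hsplit : ∑ i ∈ I, ψ (vR v i) =
      ∑ i ∈ I, α i * ψ (vR v i) + ∑ i ∈ I, (1 - α i) * ψ (vR v i) := by
    rw [← Finset.sum_add_distrib]
    exact Finset.sum_congr rfl fun i _ => by ring
  have hc := hψ.apply_sum_le hFam hα₀
  have hd := hψ.apply_sum_le hFam hα₁
  refine ⟨hsplit ▸ add_le_add hc hd, ?_⟩
  rw [hsplit, add_eq_add_iff_eq_and_eq hc hd, hψ.apply_sum_eq_iff hFam hα₀,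
    hψ.apply_sum_eq_iff hFam hα₁]
  simp only [sub_pos]

theorem statement9
    (r n : ℕ) (hr : 1 ≤ r) (hn : r ≤ n)
    (deg : (Fin r → ℝ) →ₗ[ℝ] ℝ)
    (hdegInt : ∀ m : Fin r → ℤ, ∃ k : ℤ, deg (intVec m) = (k : ℝ))
    (v : Fin n → Fin r → ℤ)
    (hv_inj : Function.Injective v)
    (hv_span : Submodule.span ℝ (Set.range (vR v)) = ⊤)
    (hv_deg : ∀ i, deg (vR v i) = 1)
    (Fam : Finset (Finset (Fin n))) (hFam : IsFan v Fam)
    (ψ : (Fin r → ℝ) → ℝ) (hψ : StrictSigmaConvex v Fam ψ)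
    (I : Finset (Fin n)) (hI : I.card = r)
    (α : Fin n → ℝ) (hα : ∀ i ∈ I, 0 ≤ α i ∧ α i ≤ 1) :
    ψ (∑ i ∈ I, α i • vR v i) + ψ (∑ i ∈ I, (1 - α i) • vR v i) ≤ ∑ i ∈ I, ψ (vR v i) ∧
    (ψ (∑ i ∈ I, α i • vR v i) + ψ (∑ i ∈ I, (1 - α i) • vR v i) = ∑ i ∈ I, ψ (vR v i) ↔
      (∃ K ∈ Fam, ∀ i ∈ I, 0 < α i → vR v i ∈ sigmaCone v K) ∧
      (∃ K ∈ Fam, ∀ i ∈ I, α i < 1 → vR v i ∈ sigmaCone v K)) :=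
  statement9_general r n v Fam hFam ψ hψ I α hα

end BBGKZ
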